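/- arXiv:1104.4904 — 10 statements merged into one kernel-verified Lean document; each statement's English description precedes it below -/
import Mathlib

section
/- For r, u > 0, a ≥ 0, b > 0 with R = (1+a)r + b and 2b ≤ u ≤ R²/b, the supremum over real c ≥ 1 of min((c-1)r/u, (1 - 1/c - (b/u)(c-1))/(1+a)) equals (1 - sqrt(b/u))²/(1+a), attained at c = sqrt(u/b). -/
/-- For 2b ≤ u ≤ R²/b, the supremum over c ≥ 1 of
min((c-1)r/u, (1 - 1/c - (b/u)(c-1))/(1+a)) equals (1 - √(b/u))²/(1+a),
attained at c = √(u/b). -/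
theorem stmt2 (r u a b R : ℝ) (hr : 0 < r) (hu : 0 < u) (ha : 0 ≤ a) (hb : 0 < b)
    (hR : R = (1+a)*r + b) (h1 : 2*b ≤ u) (h2 : u ≤ R^2/b) :
    IsGreatest {y : ℝ | ∃ c : ℝ, 1 ≤ c ∧
        y = min ((c-1)*r/u) ((1 - 1/c - (b/u)*(c-1))/(1+a))}
      ((1 - Real.sqrt (b/u))^2/(1+a)) ∧
    1 ≤ Real.sqrt (u/b) ∧
    min ((Real.sqrt (u/b) - 1)*r/u)
        ((1 - 1/(Real.sqrt (u/b)) - (b/u)*(Real.sqrt (u/b) - 1))/(1+a))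
      = (1 - Real.sqrt (b/u))^2/(1+a) := by
  have hub : 0 < u / b := div_pos hu hb
  set s := Real.sqrt (u/b) with hs
  have hs0 : 0 < s := Real.sqrt_pos.mpr hub
  have hs2 : s ^ 2 = u / b := Real.sq_sqrt hub.le
  have ha1 : (0:ℝ) < 1 + a := by linarith
  have hbu : b / u = 1 / s ^ 2 := by
    rw [hs2]; field_simp
  have hinv : Real.sqrt (b/u) = 1 / s := by
    rw [show b/u = (u/b)⁻¹ by field_simp, Real.sqrt_inv, one_div]
  have hs1 : 1 ≤ s := by
    rw [hs, show (1:ℝ) = Real.sqrt 1 by simp]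
    exact Real.sqrt_le_sqrt (by rw [le_div_iff₀ hb]; linarith)
  have hRpos : 0 < R := by
    have : 0 < (1+a)*r := mul_pos ha1 hr
    linarith
  have h2' : u * b ≤ R ^ 2 := (le_div_iff₀ hb).mp h2
  have hsR : s ≤ R / b := by
    rw [hs, show R/b = Real.sqrt ((R/b)^2) from (Real.sqrt_sq (by positivity)).symm]
    apply Real.sqrt_le_sqrt
    rw [div_pow, div_le_div_iff₀ hb (by positivity)]
    have := mul_le_mul_of_nonneg_right h2' hb.le
    nlinarith [this]
  have hbs : b * (s - 1) ≤ (1 + a) * r := by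
    have : s * b ≤ R := by
      rw [le_div_iff₀ hb] at hsR; linarith
    have e : b * (s - 1) = s * b - b := by ring
    linarith [e.le, e.ge]
  have huEq : u = b * s ^ 2 := by rw [hs2]; field_simp
  have hband : 1 - 1/s - (b/u)*(s-1) = (1 - 1/s)^2 := by
    rw [hbu]; field_simp
  have hval : (1 - Real.sqrt (b/u))^2/(1+a) = (1 - 1/s)^2/(1+a) := by rw [hinv]
  have hss : (1 - 1/s) * s = s - 1 := by field_simp
  have hfan : (1 - 1/s)^2/(1+a) ≤ (s-1)*r/u := by
    rw [div_le_div_iff₀ ha1 hu, huEq]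
    have e : (1 - 1/s)^2 * (b * s^2) = b * (s-1)^2 := by
      calc (1 - 1/s)^2 * (b * s^2) = b * ((1 - 1/s) * s)^2 := by ring
        _ = b * (s-1)^2 := by rw [hss]
    rw [e]
    nlinarith [mul_le_mul_of_nonneg_left hbs (by linarith : (0:ℝ) ≤ s - 1)]
  have hmin : min ((s - 1)*r/u) ((1 - 1/s - (b/u)*(s - 1))/(1+a))
      = (1 - Real.sqrt (b/u))^2/(1+a) := by
    rw [hval, hband, min_eq_right hfan]
  refine ⟨⟨⟨s, hs1, hmin.symm⟩, ?_⟩, hs1, hmin⟩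
  rintro y ⟨c, hc1, rfl⟩
  have hc0 : 0 < c := lt_of_lt_of_le one_pos hc1
  refine le_trans (min_le_right _ _) ?_
  rw [hval]
  have hnum : 1 - 1/c - (b/u)*(c-1) ≤ (1 - 1/s)^2 := by
    rw [hbu]
    have e2 : (1 - 1/s)^2 - (1 - 1/c - 1/s^2*(c-1)) = (c-s)^2/(c*s^2) := by
      field_simp; ring
    have hpos : (0:ℝ) ≤ (c-s)^2/(c*s^2) :=
      div_nonneg (sq_nonneg _) (by positivity)
    linarith
  gcongr
end

section
/- For r, u > 0, a ≥ 0, b > 0 with R = (1+a)r + b and u ≥ R²/b, the supremum over real c ≥ 1 of min((c-1)r/u, (1 - 1/c - (b/u)(c-1))/(1+a)) equals r/R - r/u, attained at c = u/R. -/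
/-- For u ≥ R²/b, the supremum over c ≥ 1 of
min((c-1)r/u, (1 - 1/c - (b/u)(c-1))/(1+a)) equals r/R - r/u, attained at c = u/R.  -/
theorem stmt3 (r u a b R : ℝ) (hr : 0 < r) (hu : 0 < u) (ha : 0 ≤ a) (hb : 0 < b)
    (hR : R = (1+a)*r + b) (h2 : R^2/b ≤ u) :
    IsGreatest {y : ℝ | ∃ c : ℝ, 1 ≤ c ∧
        y = min ((c-1)*r/u) ((1 - 1/c - (b/u)*(c-1))/(1+a))}
      (r/R - r/u) ∧
    1 ≤ u/R ∧
    min ((u/R - 1)*r/u) ((1 - 1/(u/R) - (b/u)*(u/R - 1))/(1+a)) = r/R - r/u := by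
  have hRpos : 0 < R := by nlinarith
  have ha1 : (0:ℝ) < 1 + a := by linarith
  have hbR : b ≤ R := by nlinarith
  have hbu : R^2 ≤ b * u := by
    have := (div_le_iff₀ hb).mp h2; linarith
  have hRu : R ≤ u := by nlinarith [mul_le_mul_of_nonneg_right hbR hu.le]
  have huR : 1 ≤ u / R := (one_le_div hRpos).mpr hRu
  have h1 : (u/R - 1)*r/u = r/R - r/u := by field_simp
  have h2' : (1 - 1/(u/R) - (b/u)*(u/R - 1))/(1+a) = r/R - r/u := by
    rw [one_div_div, div_eq_iff (ne_of_gt ha1)]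
    subst hR
    field_simp
    ring
  have hmin : min ((u/R - 1)*r/u) ((1 - 1/(u/R) - (b/u)*(u/R - 1))/(1+a)) = r/R - r/u := by
    rw [h1, h2', min_self]
  refine ⟨⟨⟨u/R, huR, hmin.symm⟩, ?_⟩, huR, hmin⟩
  rintro y ⟨c, hc, rfl⟩
  have hcpos : 0 < c := by linarith
  rcases le_total c (u/R) with h | h
  · refine le_trans (min_le_left _ _) ?_
    rw [← h1]
    gcongr
  · -- c ≥ u/R
    have hcR : u ≤ c * R := (div_le_iff₀ hRpos).mp h
    have hbc : R ≤ b * c := by nlinarith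
    have key : 0 ≤ (c * R - u) * (b * c - R) := by
      apply mul_nonneg <;> linarith
    refine le_trans (min_le_right _ _) ?_
    rw [div_le_iff₀ ha1]
    have e1 : 1 - 1/c - (b/u)*(c-1) = (c*u - u - b*c*(c-1))/(c*u) := by
      field_simp
    have e2 : (r/R - r/u)*(1+a) = (R-b)*(u-R)/(R*u) := by
      rw [eq_div_iff (by positivity)]
      subst hR
      field_simp
      ring
    rw [e1, e2, div_le_div_iff₀ (by positivity) (by positivity)]
    nlinarith [mul_nonneg hu.le key]
end

section
/- For a ≥ 0, b > 0 and u ≥ R²/b where R = (1+a)r + b, the quantification gap satisfies: if η(c) = min((c-1)r/u, (1 - 1/c - (b/u)(c-1))/(1+a)) and c_OPT = u/R, then η(c_OPT) - η(c_OPT + 1) ≤ b/(u(1+a)) ≤ (b/R)²/(1+a). -/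
/-- For u ≥ R²/b, with η(c) = min((c-1)r/u, (1 - 1/c - (b/u)(c-1))/(1+a))
and c_OPT = u/R, the quantification gap satisfies
η(c_OPT) - η(c_OPT + 1) ≤ b/(u(1+a)) ≤ (b/R)²/(1+a). -/
theorem stmt4 (r u a b R : ℝ) (hr : 0 < r) (hu : 0 < u) (ha : 0 ≤ a) (hb : 0 < b)
    (hR : R = (1+a)*r + b) (h2 : R^2/b ≤ u) :
    (min ((u/R - 1)*r/u) ((1 - 1/(u/R) - (b/u)*(u/R - 1))/(1+a))
      - min ((u/R + 1 - 1)*r/u) ((1 - 1/(u/R + 1) - (b/u)*(u/R + 1 - 1))/(1+a))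
        ≤ b/(u*(1+a))) ∧
    b/(u*(1+a)) ≤ (b/R)^2/(1+a) := by
  have h1a : (0:ℝ) < 1 + a := by linarith
  have hR0 : 0 < R := by rw [hR]; nlinarith
  subst hR
  set R := (1+a)*r + b with hRdef
  have hc : 0 < u/R := div_pos hu hR0
  have hc1 : 0 < u/R + 1 := by linarith
  have eA : (u/R - 1)*r/u = r/R - r/u := by
    field_simp
  have eB : (1 - 1/(u/R) - (b/u)*(u/R - 1))/(1+a) = r/R - r/u := by
    rw [one_div_div]
    rw [hRdef]
    field_simp
    ring
  have eA' : (u/R + 1 - 1)*r/u = r/R := by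
    field_simp
    ring
  have eB' : (1 - 1/(u/R + 1) - (b/u)*(u/R + 1 - 1))/(1+a)
      = r/R - 1/((u/R + 1)*(1+a)) := by
    have hn : (u/R + 1) ≠ 0 := hc1.ne'
    rw [hRdef] at hn ⊢
    field_simp
    ring
  rw [eA, eB, eA', eB', min_self]
  have hpos : 0 < (u/R + 1)*(1+a) := mul_pos hc1 h1a
  constructor
  · rw [min_eq_right (sub_le_self _ (le_of_lt (one_div_pos.mpr hpos)))]
    have key : 1/((u/R + 1)*(1+a)) ≤ R/(u*(1+a)) := by
      rw [div_le_div_iff₀ hpos (by positivity)]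
      have h3 : R * ((u/R+1)*(1+a)) = (u + R) * (1+a) := by field_simp
      rw [h3]
      nlinarith
    have hdec : R/(u*(1+a)) = r/u + b/(u*(1+a)) := by
      rw [hRdef]; field_simp
    linarith
  · rw [div_pow, div_div, div_le_div_iff₀ (by positivity) (by positivity)]
    have hub : R^2 ≤ u * b := (div_le_iff₀ hb).mp h2
    nlinarith [mul_le_mul_of_nonneg_left hub (by positivity : (0:ℝ) ≤ b*(1+a))]
end

section
/- For a ≥ 0, b > 0 and 2b ≤ u ≤ R²/b where R = (1+a)r+b, with c_OPT = sqrt(u/b) and η₂(c) = (1 - 1/c - (b/u)(c-1))/(1+a), one has η₂(c_OPT) - η₂(c_OPT + 1) = (b/u)(1 - 1/(1 + sqrt(b/u)))/(1+a) ≤ (b/u)^(3/2)/(1+a). -/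
/-!
With `s = √(u/b)` and `t = √(b/u)` we have `s * t = 1` and `t ^ 2 = b/u`, so the drop
`η₂(s) - η₂(s + 1)` is the rational expression `(t² - t / (s + 1)) / (1 + a)`, which simplifies to
`t² (1 - 1/(1 + t)) / (1 + a)`. The bound follows from `1 - 1/(1 + t) = t/(1 + t) ≤ t`.
-/

open Real

/-- The paper's `η₂(c)`, with the overhead ratio `b/u` abbreviated to `k`. -/
noncomputable def bandwidthLimitedEfficiency (a k c : ℝ) : ℝ :=
  (1 - 1/c - k * (c - 1)) / (1 + a)

theorem bandwidthLimitedEfficiency_sub_succ (a : ℝ) {k s t : ℝ} (hs : 0 < s)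
    (hst : s * t = 1) (hk : t ^ 2 = k) :
    bandwidthLimitedEfficiency a k s - bandwidthLimitedEfficiency a k (s + 1)
      = k * (1 - 1/(1 + t)) / (1 + a) := by
  subst hk
  have ht : t = s⁻¹ := eq_inv_of_mul_eq_one_right hst
  subst ht
  unfold bandwidthLimitedEfficiency
  field_simp
  ring

theorem one_sub_one_div_one_add_le {t : ℝ} (ht : 0 ≤ t) : 1 - 1/(1 + t) ≤ t := by
  have h : 1 - 1/(1 + t) = t / (1 + t) := by field_simp; ring
  rw [h]
  exact div_le_self ht (by linarith)

theorem rpow_three_halves_eq_mul_sqrt {x : ℝ} (hx : 0 ≤ x) : x ^ ((3:ℝ)/2) = x * √x := by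
  rw [show (3:ℝ)/2 = 1 + 1/2 by norm_num, rpow_add' hx (by norm_num), rpow_one, sqrt_eq_rpow]

theorem mul_one_sub_one_div_one_add_sqrt_le {k : ℝ} (hk : 0 ≤ k) :
    k * (1 - 1/(1 + √k)) ≤ k ^ ((3:ℝ)/2) := by
  rw [rpow_three_halves_eq_mul_sqrt hk]
  exact mul_le_mul_of_nonneg_left (one_sub_one_div_one_add_le (sqrt_nonneg k)) hk

theorem stmt5_general (u a b : ℝ) (hu : 0 < u) (ha : 0 ≤ a) (hb : 0 < b) :
    ((1 - 1/(Real.sqrt (u/b)) - (b/u)*(Real.sqrt (u/b) - 1))/(1+a)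
      - (1 - 1/(Real.sqrt (u/b) + 1) - (b/u)*(Real.sqrt (u/b) + 1 - 1))/(1+a)
        = (b/u)*(1 - 1/(1 + Real.sqrt (b/u)))/(1+a)) ∧
    (b/u)*(1 - 1/(1 + Real.sqrt (b/u)))/(1+a) ≤ (b/u) ^ ((3:ℝ)/2) / (1+a) := by
  have hsqrt : √(u/b) * √(b/u) = 1 := by
    rw [← sqrt_mul (div_pos hu hb).le, div_mul_div_comm, mul_comm u b,
      div_self (mul_pos hb hu).ne', sqrt_one]
  refine ⟨?_, ?_⟩
  · exact bandwidthLimitedEfficiency_sub_succ a (sqrt_pos.2 (div_pos hu hb)) hsqrt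
      (sq_sqrt (div_pos hb hu).le)
  · exact div_le_div_of_nonneg_right (mul_one_sub_one_div_one_add_sqrt_le (div_pos hb hu).le)
      (by linarith)

/-- For 2b ≤ u ≤ R²/b, with c_OPT = √(u/b) and
η₂(c) = (1 - 1/c - (b/u)(c-1))/(1+a), one has
η₂(c_OPT) - η₂(c_OPT+1) = (b/u)(1 - 1/(1 + √(b/u)))/(1+a) ≤ (b/u)^(3/2)/(1+a). -/
theorem stmt5 (r u a b R : ℝ) (hr : 0 < r) (hu : 0 < u) (ha : 0 ≤ a) (hb : 0 < b)
    (hR : R = (1+a)*r + b) (h1 : 2*b ≤ u) (h2 : u ≤ R^2/b) :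
    ((1 - 1/(Real.sqrt (u/b)) - (b/u)*(Real.sqrt (u/b) - 1))/(1+a)
      - (1 - 1/(Real.sqrt (u/b) + 1) - (b/u)*(Real.sqrt (u/b) + 1 - 1))/(1+a)
        = (b/u)*(1 - 1/(1 + Real.sqrt (b/u)))/(1+a)) ∧
    (b/u)*(1 - 1/(1 + Real.sqrt (b/u)))/(1+a) ≤ (b/u) ^ ((3:ℝ)/2) / (1+a) :=
  stmt5_general u a b hu ha hb
end

section
/- Let f(I) = min(1, I·N/U, r·N/U) - I/U for I ≥ 0, where N ≥ 1 is an integer, and r, U > 0. If U ≤ N·r then sup_{I≥0} f(I) = 1 - 1/N, attained at I = U/N; if U ≥ N·r then sup_{I≥0} f(I) = r(N-1)/U, attained at I = r. In both cases the supremum equals (1 - 1/N)·min(1, N·r/U). -/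
/-!
Writing `m = min U (r N)`, the bound is `f(I) = (min (I N) m - I) / U`. The numerator grows like
`I (N - 1)` while `I N ≤ m` and decreases afterwards, so it peaks at the kink `I = m / N` with value
`(1 - 1/N) m`. The two cases of the theorem are `m = U` and `m = r N`.
-/

/-- The bound f(I) = min(1, I·N/U, r·N/U) - I/U on the efficiency of a seeder set
with total bandwidth U and total input I, in a perfect system with N leechers. -/
noncomputable def effBound (N : ℕ) (r U I : ℝ) : ℝ :=
  min 1 (min (I * N / U) (r * N / U)) - I / U

section Kink

variable {K : Type*} [Field K] [LinearOrder K] [IsStrictOrderedRing K]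

theorem min_mul_sub_le {N : K} (hN : 1 ≤ N) (I m : K) :
    min (I * N) m - I ≤ (1 - 1 / N) * m := by
  have hN0 : 0 < N := zero_lt_one.trans_le hN
  rcases le_total (I * N) m with h | h
  · have hI : I ≤ m / N := (le_div_iff₀ hN0).2 h
    calc min (I * N) m - I = I * (N - 1) := by rw [min_eq_left h]; ring
      _ ≤ m / N * (N - 1) := mul_le_mul_of_nonneg_right hI (sub_nonneg.2 hN)
      _ = (1 - 1 / N) * m := by field_simp
  · have hI : m / N ≤ I := (div_le_iff₀ hN0).2 h
    calc min (I * N) m - I ≤ m - m / N := sub_le_sub (min_le_right _ _) hI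
      _ = (1 - 1 / N) * m := by ring

theorem min_mul_sub_at_kink {N : K} (hN : N ≠ 0) (m : K) :
    min (m / N * N) m - m / N = (1 - 1 / N) * m := by
  rw [div_mul_cancel₀ m hN, min_self]
  ring

end Kink

theorem effBound_eq {N : ℕ} {r U : ℝ} (hU : 0 < U) (I : ℝ) :
    effBound N r U I = (min (I * N) (min U (r * N)) - I) / U := by
  rw [effBound, ← div_self hU.ne', min_div_div_right hU.le, min_div_div_right hU.le, sub_div,
    min_left_comm]

theorem effBound_at_kink {N : ℕ} (hN : 1 ≤ N) {r U : ℝ} (hU : 0 < U) :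
    effBound N r U (min U (r * N) / N) = (1 - 1 / (N : ℝ)) * min U (r * N) / U := by
  have hN0 : (N : ℝ) ≠ 0 := by positivity
  rw [effBound_eq hU, min_mul_sub_at_kink hN0]

theorem isGreatest_effBound {N : ℕ} (hN : 1 ≤ N) {r U : ℝ} (hr : 0 < r) (hU : 0 < U) :
    IsGreatest {y : ℝ | ∃ I : ℝ, 0 ≤ I ∧ y = effBound N r U I}
      ((1 - 1 / (N : ℝ)) * min U (r * N) / U) := by
  have hN1 : (1 : ℝ) ≤ N := by exact_mod_cast hN
  refine ⟨⟨min U (r * N) / N, by positivity, (effBound_at_kink hN hU).symm⟩, ?_⟩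
  rintro y ⟨I, -, rfl⟩
  rw [effBound_eq hU]
  exact div_le_div_of_nonneg_right (min_mul_sub_le hN1 I _) hU.le

/-- If U ≤ N·r then sup_{I≥0} f(I) = 1 - 1/N, attained at I = U/N;
if U ≥ N·r then sup_{I≥0} f(I) = r(N-1)/U, attained at I = r.
In both cases the supremum equals (1 - 1/N)·min(1, N·r/U). -/
theorem stmt6 (N : ℕ) (hN : 1 ≤ N) (r U : ℝ) (hr : 0 < r) (hU : 0 < U) :
    (U ≤ N * r →
      IsGreatest {y : ℝ | ∃ I : ℝ, 0 ≤ I ∧ y = effBound N r U I} (1 - 1/(N:ℝ)) ∧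
      effBound N r U (U / N) = 1 - 1/(N:ℝ)) ∧
    ((N:ℝ) * r ≤ U →
      IsGreatest {y : ℝ | ∃ I : ℝ, 0 ≤ I ∧ y = effBound N r U I} (r*((N:ℝ)-1)/U) ∧
      effBound N r U r = r*((N:ℝ)-1)/U) ∧
    IsGreatest {y : ℝ | ∃ I : ℝ, 0 ≤ I ∧ y = effBound N r U I}
      ((1 - 1/(N:ℝ)) * min 1 ((N:ℝ)*r/U)) := by
  have hN0 : (N : ℝ) ≠ 0 := by positivity
  have hmax := isGreatest_effBound hN hr hU
  have hpeak := effBound_at_kink hN (r := r) hU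
  refine ⟨fun h => ?_, fun h => ?_, ?_⟩
  · have hm : min U (r * N) = U := min_eq_left (by linarith)
    have hval : (1 - 1 / (N : ℝ)) * U / U = 1 - 1 / N := mul_div_cancel_right₀ _ hU.ne'
    rw [hm, hval] at hmax hpeak
    exact ⟨hmax, hpeak⟩
  · have hm : min U (r * N) = r * N := min_eq_right (by linarith)
    have hval : (1 - 1 / (N : ℝ)) * (r * N) / U = r * (N - 1) / U := by field_simp
    rw [hm, hval, mul_div_cancel_right₀ r hN0] at hpeak
    rw [hm, hval] at hmax
    exact ⟨hmax, hpeak⟩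
  · have hm : min 1 ((N : ℝ) * r / U) = min U (r * N) / U := by
      rw [← min_div_div_right hU.le, div_self hU.ne', mul_comm r]
    rwa [hm, ← mul_div_assoc]
end

section
/- In a perfect system, the optimal efficiency of any subset X of seeders with total upload U_X, with N_L leechers and streamrate r, is exactly (1 - 1/N_L)·min(1, N_L·r/U_X). In particular, if U_X ≤ N_L·r, the optimal efficiency is 1 - 1/N_L. -/
/-!
A seeder set that outputs `O` to `N` leechers, each of which gets at most what the set itself
received, must receive at least `O / N`; so its net contribution is `O - I ≤ (1 - 1/N) O`, while
`O` is capped both by the upload `U` and by the total demand `N r`. Both caps are met at once by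
`O = min U (N r)` and `I = O / N`.
-/

def efficiencySet (N : ℕ) (r U : ℝ) : Set ℝ :=
  {η : ℝ | ∃ I O : ℝ, 0 ≤ I ∧ 0 ≤ O ∧ O ≤ U ∧ O ≤ (N : ℝ) * min I r ∧ η = (O - I) / U}

lemma one_sub_one_div_natCast_nonneg (N : ℕ) : 0 ≤ 1 - 1 / (N : ℝ) :=
  sub_nonneg.2 (one_div (N : ℝ) ▸ Nat.cast_inv_le_one N)

lemma sub_le_one_sub_one_div_mul {N : ℕ} {I O : ℝ} (hI : 0 ≤ I) (hO : O ≤ N * I) :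
    O - I ≤ (1 - 1 / (N : ℝ)) * O := by
  have hIO : O / N ≤ I := div_le_of_le_mul₀ (Nat.cast_nonneg N) hI (mul_comm (N : ℝ) I ▸ hO)
  rw [sub_mul, one_mul, one_div_mul_eq_div]
  linarith

lemma min_one_div_mul {a U : ℝ} (hU : 0 < U) : min 1 (a / U) * U = min U a := by
  rw [min_mul_of_nonneg _ _ hU.le, one_mul, div_mul_cancel₀ _ hU.ne']

lemma le_of_mem_efficiencySet {N : ℕ} {r U η : ℝ} (hU : 0 < U) (hη : η ∈ efficiencySet N r U) :
    η ≤ (1 - 1 / (N : ℝ)) * min 1 (N * r / U) := by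
  obtain ⟨I, O, hI, -, hOU, hOr, rfl⟩ := hη
  rw [div_le_iff₀ hU, mul_assoc, min_one_div_mul hU]
  have hON : N * min I r ≤ N * I := mul_le_mul_of_nonneg_left (min_le_left _ _) (Nat.cast_nonneg N)
  have hOr' : N * min I r ≤ N * r := mul_le_mul_of_nonneg_left (min_le_right _ _) (Nat.cast_nonneg N)
  calc O - I ≤ (1 - 1 / (N : ℝ)) * O := sub_le_one_sub_one_div_mul hI (hOr.trans hON)
    _ ≤ (1 - 1 / (N : ℝ)) * min U (N * r) :=
      mul_le_mul_of_nonneg_left (le_min hOU (hOr.trans hOr')) (one_sub_one_div_natCast_nonneg N)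

lemma mem_efficiencySet {N : ℕ} {r U : ℝ} (hr : 0 ≤ r) (hU : 0 < U) :
    (1 - 1 / (N : ℝ)) * min 1 (N * r / U) ∈ efficiencySet N r U := by
  set O := min U (N * r) with hO_def
  have hO : 0 ≤ O := le_min hU.le (by positivity)
  refine ⟨O / N, O, by positivity, hO, min_le_left _ _, ?_, ?_⟩
  · rw [mul_min_of_nonneg _ _ (Nat.cast_nonneg N)]
    rcases eq_or_ne (N : ℝ) 0 with hN | hN
    · simp [hN, hO_def, hU.le]
    · rw [mul_div_cancel₀ _ hN]
      exact le_min le_rfl (min_le_right _ _)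
  · rw [eq_div_iff hU.ne', mul_assoc, min_one_div_mul hU]
    ring

theorem isGreatest_efficiencySet {N : ℕ} {r U : ℝ} (hr : 0 ≤ r) (hU : 0 < U) :
    IsGreatest (efficiencySet N r U) ((1 - 1 / (N : ℝ)) * min 1 (N * r / U)) :=
  ⟨mem_efficiencySet hr hU, fun _ => le_of_mem_efficiencySet hU⟩

theorem stmt7_general (NL : ℕ) (r UX : ℝ) (hr : 0 < r) (hU : 0 < UX) :
    IsGreatest {η : ℝ | ∃ I O : ℝ, 0 ≤ I ∧ 0 ≤ O ∧ O ≤ UX ∧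
        O ≤ (NL:ℝ) * min I r ∧ η = (O - I)/UX}
      ((1 - 1/(NL:ℝ)) * min 1 ((NL:ℝ)*r/UX)) ∧
    (UX ≤ (NL:ℝ)*r →
      IsGreatest {η : ℝ | ∃ I O : ℝ, 0 ≤ I ∧ 0 ≤ O ∧ O ≤ UX ∧
          O ≤ (NL:ℝ) * min I r ∧ η = (O - I)/UX}
        (1 - 1/(NL:ℝ))) := by
  have h := isGreatest_efficiencySet (N := NL) hr.le hU
  refine ⟨h, fun hUr => ?_⟩
  rwa [min_eq_left ((one_le_div hU).2 hUr), mul_one] at h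

/-- In a perfect system with N_L leechers and streamrate r, a seeder set X
with total upload U_X receiving external input rate I can usefully output at most
min(U_X, N_L·min(I,r)); its optimal efficiency sup (O - I)/U_X is exactly
(1 - 1/N_L)·min(1, N_L·r/U_X), and equals 1 - 1/N_L when U_X ≤ N_L·r. -/
theorem stmt7 (NL : ℕ) (hN : 1 ≤ NL) (r UX : ℝ) (hr : 0 < r) (hU : 0 < UX) :
    IsGreatest {η : ℝ | ∃ I O : ℝ, 0 ≤ I ∧ 0 ≤ O ∧ O ≤ UX ∧
        O ≤ (NL:ℝ) * min I r ∧ η = (O - I)/UX}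
      ((1 - 1/(NL:ℝ)) * min 1 ((NL:ℝ)*r/UX)) ∧
    (UX ≤ (NL:ℝ)*r →
      IsGreatest {η : ℝ | ∃ I O : ℝ, 0 ≤ I ∧ 0 ≤ O ∧ O ≤ UX ∧
          O ≤ (NL:ℝ) * min I r ∧ η = (O - I)/UX}
        (1 - 1/(NL:ℝ))) :=
  stmt7_general NL r UX hr hU
end

section
/- A single seeder s with upload u_s and fanout limit c_s ≤ N_L (number of leechers) in an overhead-free system has optimal efficiency (1 - 1/c_s)·min(1, r·c_s/u_s); in particular if u_s ≤ r·c_s the optimal efficiency is 1 - 1/c_s. -/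
/-- A single seeder with upload u and fanout limit c ≤ N_L, receiving input
rate I and outputting on at most c connections each carrying at most min(I, r), has
optimal efficiency (1 - 1/c)·min(1, r·c/u); if u ≤ r·c this is 1 - 1/c. -/
theorem stmt8 (NL c : ℕ) (hc1 : 1 ≤ c) (hcN : c ≤ NL) (r u : ℝ) (hr : 0 < r) (hu : 0 < u) :
    IsGreatest {η : ℝ | ∃ I O : ℝ, 0 ≤ I ∧ 0 ≤ O ∧ O ≤ u ∧
        O ≤ (c:ℝ) * min I r ∧ η = (O - I)/u}
      ((1 - 1/(c:ℝ)) * min 1 (r*(c:ℝ)/u)) ∧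
    (u ≤ r*(c:ℝ) →
      IsGreatest {η : ℝ | ∃ I O : ℝ, 0 ≤ I ∧ 0 ≤ O ∧ O ≤ u ∧
          O ≤ (c:ℝ) * min I r ∧ η = (O - I)/u}
        (1 - 1/(c:ℝ))) := by
  have hc : (1:ℝ) ≤ (c:ℝ) := by exact_mod_cast hc1
  have hc0 : (0:ℝ) < (c:ℝ) := lt_of_lt_of_le one_pos hc
  have hmin : min 1 (r*(c:ℝ)/u) = min u (r*(c:ℝ)) / u := by
    rw [← min_div_div_right hu.le, div_self hu.ne']
  have hmain : IsGreatest {η : ℝ | ∃ I O : ℝ, 0 ≤ I ∧ 0 ≤ O ∧ O ≤ u ∧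
        O ≤ (c:ℝ) * min I r ∧ η = (O - I)/u}
      ((1 - 1/(c:ℝ)) * min 1 (r*(c:ℝ)/u)) := by
    constructor
    · rcases le_or_gt u (r*(c:ℝ)) with h | h
      · refine ⟨u/(c:ℝ), u, by positivity, hu.le, le_refl u, ?_, ?_⟩
        · have h1 : u/(c:ℝ) ≤ r := by
            rw [div_le_iff₀ hc0]; linarith [h]
          rw [min_eq_left h1, mul_div_cancel₀ u hc0.ne']
        · have h2 : min 1 (r*(c:ℝ)/u) = 1 := by
            rw [min_eq_left]; rw [le_div_iff₀ hu]; linarith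
          rw [h2, mul_one]
          field_simp
      · refine ⟨r, (c:ℝ)*r, hr.le, by positivity, by nlinarith, ?_, ?_⟩
        · rw [min_self]
        · have h2 : min 1 (r*(c:ℝ)/u) = r*(c:ℝ)/u := by
            rw [min_eq_right]; rw [div_le_iff₀ hu]; nlinarith
          rw [h2]
          field_simp
    · rintro η ⟨I, O, hI, hO, hOu, hOc, rfl⟩
      have hOI : O ≤ (c:ℝ) * I :=
        hOc.trans (mul_le_mul_of_nonneg_left (min_le_left _ _) hc0.le)
      have hOr : O ≤ (c:ℝ) * r :=
        hOc.trans (mul_le_mul_of_nonneg_left (min_le_right _ _) hc0.le)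
      have hIge : O / (c:ℝ) ≤ I := by
        rw [div_le_iff₀ hc0]; linarith [hOI]
      have key : O - I ≤ min u ((c:ℝ)*r) * (1 - 1/(c:ℝ)) := by
        have h1 : O - I ≤ O * (1 - 1/(c:ℝ)) := by
          have : O - I ≤ O - O/(c:ℝ) := by linarith
          calc O - I ≤ O - O/(c:ℝ) := this
            _ = O * (1 - 1/(c:ℝ)) := by field_simp
        refine h1.trans (mul_le_mul_of_nonneg_right ?_ ?_)
        · exact le_min hOu hOr
        · have : 1/(c:ℝ) ≤ 1 := by
            rw [div_le_one hc0]; exact hc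
          linarith
      rw [hmin, div_le_iff₀ hu] at *
      calc O - I ≤ min u ((c:ℝ)*r) * (1 - 1/(c:ℝ)) := key
        _ = (1 - 1/(c:ℝ)) * (min u (r*(c:ℝ)) / u) * u := by
            rw [mul_comm r (c:ℝ)]; field_simp
  refine ⟨hmain, fun h => ?_⟩
  have h2 : min 1 (r*(c:ℝ)/u) = 1 := by
    rw [min_eq_left]; rw [le_div_iff₀ hu]; linarith
  have := hmain
  rw [h2, mul_one] at this
  exact this
end

section
/- Let X be a proportionally homogeneous set of seeders (u_s = e·c_s for all s ∈ X, for some common rate e ≤ r) with limited fanouts c_s ≤ N_L. If N_X ≤ ⌊(N_L - 1)/(max_{s∈X} c_s - 1)⌋ · ⌊r/e⌋, then the optimal joint efficiency of X equals the bandwidth-weighted average of the individual optima: η_OPT(X) = (Σ_{s∈X}(1 - 1/c_s)·u_s)/U_X. -/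
open BigOperators

namespace S10

variable {σ : Type} [Fintype σ]

noncomputable def nxt [Nonempty σ] (s : σ) : σ :=
  (Fintype.equivFin σ).symm ⟨((Fintype.equivFin σ s : ℕ) + 1) % Fintype.card σ,
    Nat.mod_lt _ Fintype.card_pos⟩

noncomputable def prv [Nonempty σ] (s : σ) : σ :=
  (Fintype.equivFin σ).symm ⟨((Fintype.equivFin σ s : ℕ) + (Fintype.card σ - 1)) % Fintype.card σ,
    Nat.mod_lt _ Fintype.card_pos⟩

lemma nxt_prv [Nonempty σ] (s : σ) : nxt (prv s) = s := by
  have hM : 0 < Fintype.card σ := Fintype.card_pos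
  have hx : (Fintype.equivFin σ s : ℕ) < Fintype.card σ := (Fintype.equivFin σ s).isLt
  unfold nxt prv
  simp only [Equiv.apply_symm_apply]
  rw [Equiv.symm_apply_eq]
  apply Fin.ext
  simp only
  rw [Nat.mod_add_mod]
  have h1 : (Fintype.equivFin σ s : ℕ) + (Fintype.card σ - 1) + 1
      = (Fintype.equivFin σ s : ℕ) + Fintype.card σ := by omega
  rw [h1, Nat.add_mod_right, Nat.mod_eq_of_lt hx]

lemma prv_nxt [Nonempty σ] (s : σ) : prv (nxt s) = s := by
  have hM : 0 < Fintype.card σ := Fintype.card_pos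
  have hx : (Fintype.equivFin σ s : ℕ) < Fintype.card σ := (Fintype.equivFin σ s).isLt
  unfold nxt prv
  simp only [Equiv.apply_symm_apply]
  rw [Equiv.symm_apply_eq]
  apply Fin.ext
  simp only
  rw [Nat.mod_add_mod]
  have h1 : (Fintype.equivFin σ s : ℕ) + 1 + (Fintype.card σ - 1)
      = (Fintype.equivFin σ s : ℕ) + Fintype.card σ := by omega
  rw [h1, Nat.add_mod_right, Nat.mod_eq_of_lt hx]

lemma eq_prv_iff [Nonempty σ] (t s : σ) : t = prv s ↔ s = nxt t := by
  constructor
  · rintro rfl; exact (nxt_prv s).symm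
  · rintro rfl; exact (prv_nxt t).symm

noncomputable def off (c : σ → ℕ) (s : σ) : ℕ :=
  ∑ t ∈ Finset.univ.filter
    (fun t => (Fintype.equivFin σ t : ℕ) < (Fintype.equivFin σ s : ℕ)), (c t - 1)

lemma off_add_le (c : σ → ℕ) {s s' : σ}
    (h : (Fintype.equivFin σ s : ℕ) < (Fintype.equivFin σ s' : ℕ)) :
    off c s + (c s - 1) ≤ off c s' := by
  classical
  have hnot : s ∉ Finset.univ.filter
      (fun t => (Fintype.equivFin σ t : ℕ) < (Fintype.equivFin σ s : ℕ)) := by simp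
  have hsub : insert s (Finset.univ.filter
      (fun t => (Fintype.equivFin σ t : ℕ) < (Fintype.equivFin σ s : ℕ)))
      ⊆ Finset.univ.filter
      (fun t => (Fintype.equivFin σ t : ℕ) < (Fintype.equivFin σ s' : ℕ)) := by
    intro t ht
    simp only [Finset.mem_insert, Finset.mem_filter, Finset.mem_univ, true_and] at ht ⊢
    rcases ht with rfl | ht
    · exact h
    · exact ht.trans h
  calc off c s + (c s - 1)
      = ∑ t ∈ insert s (Finset.univ.filter
          (fun t => (Fintype.equivFin σ t : ℕ) < (Fintype.equivFin σ s : ℕ))), (c t - 1) := by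
        rw [Finset.sum_insert hnot, off, Nat.add_comm]
    _ ≤ off c s' := Finset.sum_le_sum_of_subset hsub

lemma off_add_le_total (c : σ → ℕ) (s : σ) :
    off c s + (c s - 1) ≤ ∑ t : σ, (c t - 1) := by
  classical
  have hnot : s ∉ Finset.univ.filter
      (fun t => (Fintype.equivFin σ t : ℕ) < (Fintype.equivFin σ s : ℕ)) := by simp
  calc off c s + (c s - 1)
      = ∑ t ∈ insert s (Finset.univ.filter
          (fun t => (Fintype.equivFin σ t : ℕ) < (Fintype.equivFin σ s : ℕ))), (c t - 1) := by
        rw [Finset.sum_insert hnot, off, Nat.add_comm]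
    _ ≤ ∑ t : σ, (c t - 1) :=
        Finset.sum_le_sum_of_subset (Finset.subset_univ _)

noncomputable def tg (c : σ → ℕ) (N : ℕ) (hN : 0 < N) (s : σ) : Finset (Fin N) :=
  (Finset.range (c s - 1)).image (fun j => ⟨(off c s + j) % N, Nat.mod_lt _ hN⟩)

lemma tg_card (c : σ → ℕ) (N : ℕ) (hN : 0 < N) (s : σ) (hd : c s - 1 ≤ N) :
    (tg c N hN s).card = c s - 1 := by
  rw [tg, Finset.card_image_of_injOn, Finset.card_range]
  intro j hj j' hj' hjj
  simp only [Finset.coe_range, Set.mem_Iio] at hj hj'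
  have h1 : (off c s + j) % N = (off c s + j') % N := congrArg Fin.val hjj
  have h2 : j ≡ j' [MOD N] := Nat.ModEq.add_left_cancel' (off c s) h1
  have h3 : j % N = j' % N := h2
  rwa [Nat.mod_eq_of_lt (by omega), Nat.mod_eq_of_lt (by omega)] at h3

lemma mem_tg_iff (c : σ → ℕ) (N : ℕ) (hN : 0 < N) (s : σ) (l : Fin N) :
    l ∈ tg c N hN s ↔ ∃ j, j < c s - 1 ∧ (off c s + j) % N = l.val := by
  simp only [tg, Finset.mem_image, Finset.mem_range]
  constructor
  · rintro ⟨j, hj, rfl⟩; exact ⟨j, hj, rfl⟩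
  · rintro ⟨j, hj, hmod⟩; exact ⟨j, hj, Fin.ext hmod⟩

lemma deg_le_K (c : σ → ℕ) (N K : ℕ) (hN : 0 < N) (hK : 0 < K)
    (hT : ∑ s : σ, (c s - 1) ≤ K * (N - 1)) (l : Fin N) :
    (Finset.univ.filter (fun s => l ∈ tg c N hN s)).card ≤ K := by
  classical
  set φ : σ → ℕ := fun s =>
    if h : ∃ j, j < c s - 1 ∧ (off c s + j) % N = l.val
    then (off c s + Nat.find h) / N else 0 with hφ
  have hslot : ∀ s, l ∈ tg c N hN s →
      ∃ i, i % N = l.val ∧ off c s ≤ i ∧ i < off c s + (c s - 1) ∧ φ s = i / N := by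
    intro s hs
    have h := (mem_tg_iff c N hN s l).mp hs
    refine ⟨off c s + Nat.find h, (Nat.find_spec h).2, Nat.le_add_right _ _, ?_, ?_⟩
    · have := (Nat.find_spec h).1; omega
    · simp only [hφ, dif_pos h]
  have hTK : K * (N - 1) + K = K * N := by
    conv_rhs => rw [show N = (N - 1) + 1 by omega]
    rw [Nat.mul_add, Nat.mul_one]
  have hmap : ∀ s ∈ Finset.univ.filter (fun s => l ∈ tg c N hN s), φ s ∈ Finset.range K := by
    intro s hs
    simp only [Finset.mem_filter, Finset.mem_univ, true_and] at hs
    obtain ⟨i, hmod, hlo, hhi, hval⟩ := hslot s hs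
    have hiT : i < ∑ t : σ, (c t - 1) := lt_of_lt_of_le hhi (off_add_le_total c s)
    have hKN : i < N * K := by rw [Nat.mul_comm]; omega
    rw [Finset.mem_range, hval]
    exact Nat.div_lt_of_lt_mul hKN
  have hinj : Set.InjOn φ (Finset.univ.filter (fun s => l ∈ tg c N hN s)) := by
    intro s hs s' hs' heq
    simp only [Finset.coe_filter, Set.mem_setOf_eq, Finset.mem_univ, true_and] at hs hs'
    obtain ⟨i, hmod, hlo, hhi, hval⟩ := hslot s hs
    obtain ⟨i', hmod', hlo', hhi', hval'⟩ := hslot s' hs'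
    have hii : i = i' := by
      have h1 : i / N = i' / N := by rw [← hval, ← hval', heq]
      have h2 : i % N = i' % N := by rw [hmod, hmod']
      have d1 := Nat.div_add_mod i N
      have d2 := Nat.div_add_mod i' N
      rw [h1, h2] at d1
      omega
    by_contra hne
    have hεne : (Fintype.equivFin σ s : ℕ) ≠ (Fintype.equivFin σ s' : ℕ) := by
      intro hh
      exact hne ((Fintype.equivFin σ).injective (Fin.ext hh))
    rcases lt_or_gt_of_ne hεne with hlt | hgt
    · have := off_add_le c hlt; omega
    · have := off_add_le c hgt; omega
  calc (Finset.univ.filter (fun s => l ∈ tg c N hN s)).card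
      ≤ (Finset.range K).card := Finset.card_le_card_of_injOn φ hmap hinj
    _ = K := Finset.card_range K

open Classical in
noncomputable def F [Nonempty σ] (c : σ → ℕ) (N : ℕ) (hN : 0 < N) (e : ℝ) :
    (Fin N ⊕ σ) → (Fin N ⊕ σ) → ℝ
  | .inl _, _ => 0
  | .inr s, .inl l => if l ∈ tg c N hN s then e else 0
  | .inr s, .inr t => if t = nxt s then e else 0

noncomputable def deg (c : σ → ℕ) (N : ℕ) (hN : 0 < N) (l : Fin N) : ℕ :=
  (Finset.univ.filter (fun s => l ∈ tg c N hN s)).card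

noncomputable def Srv [Nonempty σ] (c : σ → ℕ) (N : ℕ) (hN : 0 < N) (r e : ℝ) :
    (Fin N ⊕ σ) → ℝ
  | .inl l => r - e * deg c N hN l
  | .inr _ => 0

variable [Nonempty σ] {c : σ → ℕ} {N : ℕ} {hN : 0 < N} {e r : ℝ}

@[simp] lemma F_inl (l : Fin N) (q : Fin N ⊕ σ) : F c N hN e (.inl l) q = 0 := rfl
@[simp] lemma F_inr_inl (s : σ) (l : Fin N) :
    F c N hN e (.inr s) (.inl l) = if l ∈ tg c N hN s then e else 0 := rfl
open Classical in
@[simp] lemma F_inr_inr (s t : σ) :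
    F c N hN e (.inr s) (.inr t) = if t = nxt s then e else 0 := rfl
@[simp] lemma Srv_inl (l : Fin N) : Srv c N hN r e (.inl l) = r - e * deg c N hN l := rfl
@[simp] lemma Srv_inr (s : σ) : Srv c N hN r e (.inr s) = 0 := rfl

lemma sum_F_row_leech (s : σ) (hd : c s - 1 ≤ N) :
    ∑ l : Fin N, F c N hN e (.inr s) (.inl l) = e * ((c s - 1 : ℕ) : ℝ) := by
  simp only [F_inr_inl]
  rw [Finset.sum_ite_mem, Finset.univ_inter, Finset.sum_const,
    tg_card c N hN s hd, nsmul_eq_mul, mul_comm]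

lemma sum_F_row_seed (s : σ) : ∑ t : σ, F c N hN e (.inr s) (.inr t) = e := by
  classical
  simp only [F_inr_inr]
  simp [Finset.sum_ite_eq']

lemma sum_F_col_seed (s : σ) : ∑ t : σ, F c N hN e (.inr t) (.inr s) = e := by
  classical
  simp only [F_inr_inr]
  have h : ∀ t : σ, (if s = nxt t then e else 0) = (if t = prv s then e else 0) := by
    intro t
    by_cases h1 : t = prv s
    · rw [if_pos h1, if_pos ((eq_prv_iff t s).mp h1)]
    · rw [if_neg h1, if_neg (fun hh => h1 ((eq_prv_iff t s).mpr hh))]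
  rw [Finset.sum_congr rfl (fun t _ => h t)]
  simp [Finset.sum_ite_eq']

open Classical in
lemma sum_F_col_leech (l : Fin N) :
    ∑ t : σ, F c N hN e (.inr t) (.inl l) = e * (deg c N hN l : ℝ) := by
  simp only [F_inr_inl]
  rw [Finset.sum_ite, Finset.sum_const, Finset.sum_const_zero, add_zero,
    nsmul_eq_mul, mul_comm, deg]

end S10

/-- Limited fanout, overhead-free model with N leechers (`Fin N`) and a
proportionally homogeneous set X of seeders (type σ, u s = e·(c s), e ≤ r, c s ≤ N).
If |X| ≤ ⌊(N-1)/(max c - 1)⌋·⌊r/e⌋ then the optimal joint efficiency of X equals the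
bandwidth-weighted average of the individual optima, (Σ_s (1 - 1/c_s)·u_s)/U_X. -/
theorem stmt10 (N : ℕ) (hN : 1 ≤ N) (σ : Type) [Fintype σ] [Nonempty σ]
    (c : σ → ℕ) (hc1 : ∀ s, 1 ≤ c s) (hcN : ∀ s, c s ≤ N)
    (r e : ℝ) (hr : 0 < r) (he : 0 < e) (her : e ≤ r)
    (u : σ → ℝ) (hu : ∀ s, u s = e * (c s : ℝ))
    (hcard : Fintype.card σ ≤ ((N - 1) / (Finset.univ.sup c - 1)) * ⌊r / e⌋₊) :
    IsGreatest {η : ℝ | ∃ (f : (Fin N ⊕ σ) → (Fin N ⊕ σ) → ℝ) (srv : Fin N ⊕ σ → ℝ),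
        (∀ p q, 0 ≤ f p q) ∧ (∀ p, 0 ≤ srv p) ∧
        -- a node cannot forward at a rate exceeding its input rate
        (∀ p q, f p q ≤ srv p + ∑ q', f q' p) ∧
        -- substreams received are non-overlapping parts of the rate-r stream
        (∀ p, srv p + ∑ q, f q p ≤ r) ∧
        -- every leecher receives the full stream
        (∀ l : Fin N, srv (.inl l) + ∑ q, f q (.inl l) = r) ∧
        -- upload capacity of each seeder
        (∀ s : σ, ∑ q, f (.inr s) q ≤ u s) ∧
        -- fanout limit of each seeder
        (∀ s : σ, ({q | f (.inr s) q ≠ 0} : Set (Fin N ⊕ σ)).ncard ≤ c s) ∧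
        -- joint efficiency of X = all seeders:
        -- (output of X to leechers - input to X from outside X) / U_X
        η = ((∑ s : σ, ∑ l : Fin N, f (.inr s) (.inl l))
              - (∑ s : σ, (srv (.inr s) + ∑ l : Fin N, f (.inl l) (.inr s))))
            / (∑ s : σ, u s)}
      ((∑ s : σ, (1 - 1/(c s : ℝ)) * u s) / (∑ s : σ, u s)) := by
  classical
  have hN0 : 0 < N := hN
  set K := ⌊r / e⌋₊ with hKdef
  have hre : (1:ℝ) ≤ r / e := (one_le_div he).mpr her
  have hK1 : 1 ≤ K := by
    rw [hKdef]
    exact Nat.le_floor (by exact_mod_cast hre)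
  have hKr : (K:ℝ) ≤ r / e := Nat.floor_le (by positivity)
  have heK : e * (K:ℝ) ≤ r := by
    calc e * (K:ℝ) ≤ e * (r / e) := mul_le_mul_of_nonneg_left hKr he.le
      _ = r := by field_simp
  have hcposR : ∀ s : σ, (0:ℝ) < (c s : ℝ) := fun s => by exact_mod_cast hc1 s
  have hupos : ∀ s : σ, 0 < u s := fun s => by rw [hu]; exact mul_pos he (hcposR s)
  have hU : 0 < ∑ s : σ, u s := Finset.sum_pos (fun s _ => hupos s) Finset.univ_nonempty
  -- total-slots bound
  have hT : ∑ s : σ, (c s - 1) ≤ K * (N - 1) := by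
    have hstep : ∀ s : σ, c s - 1 ≤ Finset.univ.sup c - 1 := fun s =>
      Nat.sub_le_sub_right (Finset.le_sup (Finset.mem_univ s)) 1
    have hdm : ((N - 1) / (Finset.univ.sup c - 1)) * (Finset.univ.sup c - 1) ≤ N - 1 :=
      Nat.div_mul_le_self _ _
    calc ∑ s : σ, (c s - 1) ≤ ∑ _s : σ, (Finset.univ.sup c - 1) :=
          Finset.sum_le_sum (fun s _ => hstep s)
      _ = Fintype.card σ * (Finset.univ.sup c - 1) := by
          rw [Finset.sum_const, smul_eq_mul, Finset.card_univ]
      _ ≤ ((N - 1) / (Finset.univ.sup c - 1)) * K * (Finset.univ.sup c - 1) :=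
          Nat.mul_le_mul_right _ hcard
      _ = ((N - 1) / (Finset.univ.sup c - 1)) * (Finset.univ.sup c - 1) * K := by ring
      _ ≤ (N - 1) * K := Nat.mul_le_mul_right _ hdm
      _ = K * (N - 1) := Nat.mul_comm _ _
  have hdN : ∀ s : σ, c s - 1 ≤ N := fun s => by have := hcN s; omega
  have hdeg : ∀ l : Fin N, S10.deg c N hN0 l ≤ K := fun l =>
    S10.deg_le_K c N K hN0 (by omega) hT l
  have hsrvle : ∀ l : Fin N, e * (S10.deg c N hN0 l : ℝ) ≤ r := by
    intro l
    have h1 : (S10.deg c N hN0 l : ℝ) ≤ (K : ℝ) := by exact_mod_cast hdeg l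
    calc e * (S10.deg c N hN0 l : ℝ) ≤ e * (K:ℝ) :=
          mul_le_mul_of_nonneg_left h1 he.le
      _ ≤ r := heK
  constructor
  · -- MEMBERSHIP
    refine ⟨S10.F c N hN0 e, S10.Srv c N hN0 r e, ?_, ?_, ?_, ?_, ?_, ?_, ?_, ?_⟩
    · rintro (l | s) (q | q) <;> simp [S10.F] <;> split_ifs <;> simp [he.le]
    · rintro (l | s)
      · simp only [S10.Srv_inl]
        linarith [hsrvle l]
      · simp
    · -- capacity of edges
      rintro (l | s) q
      · simp only [S10.F_inl]
        refine add_nonneg ?_ (Finset.sum_nonneg fun q' _ => ?_)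
        · simp only [S10.Srv_inl]
          linarith [hsrvle l]
        · rcases q' with a | a <;> simp [S10.F] <;> split_ifs <;> simp [he.le]
      · have hin : (∑ q', S10.F c N hN0 e q' (.inr s)) = e := by
          rw [Fintype.sum_sum_type]
          simp only [S10.F_inl, Finset.sum_const_zero, zero_add]
          exact S10.sum_F_col_seed s
        rw [hin, S10.Srv_inr, zero_add]
        rcases q with l' | t' <;> simp only [S10.F_inr_inl, S10.F_inr_inr] <;>
          split_ifs <;> simp [he.le]
    · -- total input ≤ r
      rintro (l | s)
      · rw [Fintype.sum_sum_type]
        simp only [S10.F_inl, Finset.sum_const_zero, zero_add, S10.Srv_inl]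
        rw [S10.sum_F_col_leech l]
        linarith
      · rw [Fintype.sum_sum_type]
        simp only [S10.F_inl, Finset.sum_const_zero, zero_add, S10.Srv_inr]
        rw [S10.sum_F_col_seed s]
        exact her
    · -- leecher receives full stream
      intro l
      rw [Fintype.sum_sum_type]
      simp only [S10.F_inl, Finset.sum_const_zero, zero_add, S10.Srv_inl]
      rw [S10.sum_F_col_leech l]
      ring
    · -- upload capacity
      intro s
      rw [Fintype.sum_sum_type, S10.sum_F_row_leech s (hdN s), S10.sum_F_row_seed s, hu]
      have : ((c s - 1 : ℕ) : ℝ) = (c s : ℝ) - 1 := by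
        rw [Nat.cast_sub (hc1 s), Nat.cast_one]
      rw [this]
      ring_nf
      linarith
    · -- fanout
      intro s
      have hset : {q | S10.F c N hN0 e (.inr s) q ≠ 0} =
          ((insert (Sum.inr (S10.nxt s)) ((S10.tg c N hN0 s).image Sum.inl) :
            Finset (Fin N ⊕ σ)) : Set (Fin N ⊕ σ)) := by
        ext q
        rcases q with l | t
        · simp [S10.F, he.ne']
        · simp [S10.F, he.ne']
      rw [hset, Set.ncard_coe_finset, Finset.card_insert_of_notMem (by simp),
        Finset.card_image_of_injective _ Sum.inl_injective, S10.tg_card c N hN0 s (hdN s)]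
      have := hc1 s
      omega
    · -- efficiency value
      have h1 : (∑ s : σ, ∑ l : Fin N, S10.F c N hN0 e (.inr s) (.inl l))
          = ∑ s : σ, (1 - 1/(c s : ℝ)) * u s := by
        refine Finset.sum_congr rfl fun s _ => ?_
        rw [S10.sum_F_row_leech s (hdN s), hu, Nat.cast_sub (hc1 s), Nat.cast_one]
        have hc0 : (c s : ℝ) ≠ 0 := (hcposR s).ne'
        field_simp
      have h2 : (∑ s : σ, (S10.Srv c N hN0 r e (.inr s)
          + ∑ l : Fin N, S10.F c N hN0 e (.inl l) (.inr s))) = 0 := by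
        refine Finset.sum_eq_zero fun s _ => ?_
        simp [S10.F]
      rw [h1, h2, sub_zero]
  · -- UPPER BOUND
    rintro η ⟨f, srv, hf0, hsrv0, hcap, hin, hleech, hup, hfan, rfl⟩
    rw [div_le_div_iff₀ hU hU]
    refine mul_le_mul_of_nonneg_right ?_ hU.le
    set out : σ → ℝ := fun s => ∑ q, f (.inr s) q with hout
    set inp : σ → ℝ := fun s => srv (.inr s) + ∑ q, f q (.inr s) with hinp
    have hA : ((∑ s : σ, ∑ l : Fin N, f (.inr s) (.inl l))
          - (∑ s : σ, (srv (.inr s) + ∑ l : Fin N, f (.inl l) (.inr s))))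
        = ∑ s : σ, (out s - inp s) := by
      have h1 : ∀ s : σ, (∑ l : Fin N, f (.inr s) (.inl l))
          = out s - ∑ t : σ, f (.inr s) (.inr t) := by
        intro s
        rw [hout]
        simp only
        rw [Fintype.sum_sum_type]
        ring
      have h2 : ∀ s : σ, (srv (.inr s) + ∑ l : Fin N, f (.inl l) (.inr s))
          = inp s - ∑ t : σ, f (.inr t) (.inr s) := by
        intro s
        rw [hinp]
        simp only
        rw [Fintype.sum_sum_type]
        ring
      rw [Finset.sum_congr rfl (fun s _ => h1 s), Finset.sum_congr rfl (fun s _ => h2 s),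
        Finset.sum_sub_distrib, Finset.sum_sub_distrib, Finset.sum_sub_distrib]
      rw [Finset.sum_comm (s := Finset.univ) (t := Finset.univ)
        (f := fun s t => f (.inr t) (.inr s))]
      ring
    rw [hA]
    refine Finset.sum_le_sum fun s _ => ?_
    have hinp0 : 0 ≤ inp s := add_nonneg (hsrv0 _) (Finset.sum_nonneg fun q _ => hf0 q _)
    have hout0 : 0 ≤ out s := Finset.sum_nonneg fun q _ => hf0 _ q
    have hcpos : (0:ℝ) < (c s : ℝ) := hcposR s
    have houtc : out s ≤ (c s : ℝ) * inp s := by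
      set Fs := Finset.univ.filter (fun q => f (.inr s) q ≠ 0) with hFs
      have hFe : out s = ∑ q ∈ Fs, f (.inr s) q := by
        rw [hout]
        simp only
        exact (Finset.sum_filter_ne_zero _).symm
      have hcardF : Fs.card ≤ c s := by
        have h := hfan s
        have hseteq : {q | f (.inr s) q ≠ 0} = ↑Fs := by
          ext q; simp [hFs]
        rwa [hseteq, Set.ncard_coe_finset] at h
      have hterm : ∀ q ∈ Fs, f (.inr s) q ≤ inp s := fun q _ => hcap _ q
      calc out s = ∑ q ∈ Fs, f (.inr s) q := hFe
        _ ≤ Fs.card • inp s := Finset.sum_le_card_nsmul Fs _ _ hterm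
        _ = (Fs.card : ℝ) * inp s := nsmul_eq_mul _ _
        _ ≤ (c s : ℝ) * inp s := by
            refine mul_le_mul_of_nonneg_right ?_ hinp0
            exact_mod_cast hcardF
    have houtu : out s ≤ u s := hup s
    have h1 : out s / (c s : ℝ) ≤ inp s := by
      rw [div_le_iff₀ hcpos]
      nlinarith
    have h2 : 1/(c s : ℝ) ≤ 1 := by
      rw [div_le_one hcpos]
      exact_mod_cast hc1 s
    calc out s - inp s ≤ out s - out s / (c s : ℝ) := by linarith
      _ = out s * (1 - 1/(c s : ℝ)) := by field_simp
      _ ≤ u s * (1 - 1/(c s : ℝ)) := mul_le_mul_of_nonneg_right houtu (by linarith)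
      _ = (1 - 1/(c s : ℝ)) * u s := mul_comm _ _
end

section
/- For a seeder s whose input rate is forced to equal the full streamrate r, the best achievable efficiency in the linear overhead model is max(0, r(⌊u_s/R⌋ - 1)/u_s, (1 - (b/u_s)·⌈u_s/R⌉)/(1+a) - r/u_s), where R = (1+a)r + b. In particular, if u_s < R this equals 0. -/
open BigOperators

set_option maxHeartbeats 1000000

/-- A seeder whose input rate is forced to equal the full streamrate r
(it either stays unused, with efficiency 0, or opens n connections with goodputs
e_i ≤ r at total cost (1+a)Σe_i + n·b ≤ u, with efficiency (Σe_i - r)/u) has best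
achievable efficiency max(0, r(⌊u/R⌋-1)/u, (1 - (b/u)⌈u/R⌉)/(1+a) - r/u), where
R = (1+a)r + b.  In particular this value is 0 when u < R. -/
theorem stmt15 (r a b u R : ℝ) (hr : 0 < r) (ha : 0 ≤ a) (hb : 0 < b) (hu : 0 < u)
    (hR : R = (1+a)*r + b) :
    IsGreatest ({0} ∪ {η : ℝ | ∃ (n : ℕ) (e : Fin n → ℝ),
        (∀ i, 0 ≤ e i ∧ e i ≤ r) ∧
        (1+a) * (∑ i, e i) + (n:ℝ) * b ≤ u ∧
        η = ((∑ i, e i) - r)/u})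
      (max 0 (max (r * ((⌊u/R⌋₊ : ℝ) - 1) / u)
        ((1 - (b/u) * (⌈u/R⌉₊ : ℝ))/(1+a) - r/u))) ∧
    (u < R →
      max 0 (max (r * ((⌊u/R⌋₊ : ℝ) - 1) / u)
        ((1 - (b/u) * (⌈u/R⌉₊ : ℝ))/(1+a) - r/u)) = 0) := by
  have h1a : (0:ℝ) < 1 + a := by linarith
  have hRpos : 0 < R := by rw [hR]; nlinarith
  have hdiv : 0 < u / R := div_pos hu hRpos
  set A := r * ((⌊u/R⌋₊ : ℝ) - 1) / u with hA
  set B := (1 - (b/u) * (⌈u/R⌉₊ : ℝ))/(1+a) - r/u with hB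
  refine ⟨⟨?_, ?_⟩, ?_⟩
  · -- membership
    rcases le_or_gt (max A B) 0 with h | h
    · left; simp [max_eq_left h]
    · right
      rw [max_eq_right h.le]
      rcases le_total B A with hBA | hAB
      · -- attained by n = ⌊u/R⌋, e i = r
        rw [max_eq_left hBA]
        set n := ⌊u/R⌋₊ with hn
        have hnle : (n:ℝ) ≤ u / R := Nat.floor_le hdiv.le
        have hnR : (n:ℝ) * R ≤ u := (le_div_iff₀ hRpos).mp hnle
        refine ⟨n, fun _ => r, fun i => ⟨hr.le, le_refl r⟩, ?_, ?_⟩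
        · have hsum : (∑ _i : Fin n, r) = (n:ℝ) * r := by
            simp [Finset.sum_const, nsmul_eq_mul]
          rw [hsum]
          nlinarith [hnR]
        · have hsum : (∑ _i : Fin n, r) = (n:ℝ) * r := by
            simp [Finset.sum_const, nsmul_eq_mul]
          rw [hsum, hA]; ring
      · -- attained by n = ⌈u/R⌉, equal split using full capacity
        rw [max_eq_right hAB]
        have hBpos : 0 < B := by rw [max_eq_right hAB] at h; exact h
        set n := ⌈u/R⌉₊ with hn
        have hn1 : 1 ≤ n := Nat.one_le_iff_ne_zero.mpr (Nat.ceil_pos.mpr hdiv).ne'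
        have hnpos : (0:ℝ) < (n:ℝ) := by exact_mod_cast Nat.ceil_pos.mpr hdiv
        have hnge : u / R ≤ (n:ℝ) := Nat.le_ceil _
        have hunR : u ≤ (n:ℝ) * R := by
          rw [div_le_iff₀ hRpos] at hnge; linarith
        have hru : 0 < r / u := div_pos hr hu
        have h3 : 0 < (1 - b/u * (n:ℝ))/(1+a) := by
          rw [hB] at hBpos; linarith
        have h4 : 0 < 1 - b/u * (n:ℝ) := by
          have h5 := mul_pos h3 h1a
          rwa [div_mul_cancel₀ _ h1a.ne'] at h5
        have hnbu : (n:ℝ) * b < u := by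
          have h5 := mul_lt_mul_of_pos_right (show b/u * (n:ℝ) < 1 by linarith) hu
          rw [one_mul] at h5
          have h6 : b/u * (n:ℝ) * u = (n:ℝ) * b := by field_simp
          linarith [h6 ▸ h5]
        set ev : ℝ := (u - (n:ℝ)*b) / ((1+a) * (n:ℝ)) with hev
        have hden : (0:ℝ) < (1+a) * (n:ℝ) := mul_pos h1a hnpos
        have hev0 : 0 ≤ ev := div_nonneg (by linarith) hden.le
        have hevr : ev ≤ r := by
          rw [hev, div_le_iff₀ hden]
          rw [hR] at hunR
          nlinarith [hunR]
        refine ⟨n, fun _ => ev, fun i => ⟨hev0, hevr⟩, ?_, ?_⟩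
        · have hsum : (∑ _i : Fin n, ev) = (n:ℝ) * ev := by
            simp [Finset.sum_const, nsmul_eq_mul]
          rw [hsum, hev]
          have : (1+a) * ((n:ℝ) * ((u - (n:ℝ)*b) / ((1+a) * (n:ℝ)))) = u - (n:ℝ)*b := by
            field_simp
          rw [this]; linarith
        · have hsum : (∑ _i : Fin n, ev) = (n:ℝ) * ev := by
            simp [Finset.sum_const, nsmul_eq_mul]
          rw [hsum, hev, hB]
          field_simp
  · -- upper bound
    rintro η (h0 | ⟨n, e, he, hcost, hη⟩)
    · simp at h0; simp [h0]
    · set S := ∑ i, e i with hS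
      have hS0 : 0 ≤ S := Finset.sum_nonneg fun i _ => (he i).1
      have hSnr : S ≤ (n:ℝ) * r := by
        calc S ≤ ∑ _i : Fin n, r := Finset.sum_le_sum fun i _ => (he i).2
        _ = (n:ℝ) * r := by simp [Finset.sum_const, nsmul_eq_mul]
      rcases le_or_gt S r with hSr | hSr
      · rw [hη]
        exact le_trans (div_nonpos_of_nonpos_of_nonneg (by linarith) hu.le)
          (le_max_left _ _)
      · refine le_trans ?_ (le_max_right _ _)
        rcases le_or_gt ((n:ℝ) * R) u with hcase | hcase
        · -- n ≤ floor
          refine le_trans ?_ (le_max_left A B)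
          have hnfl : (n:ℝ) ≤ (⌊u/R⌋₊ : ℝ) := by
            exact_mod_cast Nat.le_floor ((le_div_iff₀ hRpos).mpr hcase)
          have h1 : S ≤ (⌊u/R⌋₊:ℝ) * r :=
            hSnr.trans (mul_le_mul_of_nonneg_right hnfl hr.le)
          rw [hη, hA]
          gcongr
          nlinarith [h1]
        · -- ceil ≤ n
          refine le_trans ?_ (le_max_right A B)
          have hncl : (⌈u/R⌉₊ : ℝ) ≤ (n:ℝ) := by
            exact_mod_cast Nat.ceil_le.mpr ((div_le_iff₀ hRpos).mpr hcase.le)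
          have hkey : S ≤ (u - (⌈u/R⌉₊ : ℝ) * b) / (1+a) := by
            rw [le_div_iff₀ h1a]
            nlinarith [hcost, hncl, hb]
          have hBeq : ((u - (⌈u/R⌉₊ : ℝ) * b) / (1+a) - r) / u = B := by
            rw [hB]; field_simp
          rw [hη, ← hBeq]
          gcongr
  · -- u < R case
    intro hult
    have hfl : ⌊u/R⌋₊ = 0 := Nat.floor_eq_zero.mpr ((div_lt_one hRpos).mpr hult)
    have hcl : (1:ℝ) ≤ (⌈u/R⌉₊ : ℝ) := by
      exact_mod_cast Nat.one_le_iff_ne_zero.mpr (Nat.ceil_pos.mpr hdiv).ne'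
    have hA0 : A ≤ 0 := by
      rw [hA, hfl]
      simp only [Nat.cast_zero]
      apply div_nonpos_of_nonpos_of_nonneg ?_ hu.le
      nlinarith
    have hB0 : B ≤ 0 := by
      rw [hB]
      have hbun : b/u ≤ (b/u) * (⌈u/R⌉₊ : ℝ) := by
        nlinarith [div_pos hb hu, hcl]
      have : (1 - (b/u) * (⌈u/R⌉₊ : ℝ))/(1+a) ≤ (1 - b/u)/(1+a) := by
        gcongr
      have h2 : (1 - b/u)/(1+a) ≤ r/u := by
        rw [div_le_div_iff₀ h1a hu]
        have h3 : u - b ≤ (1+a)*r := by rw [hR] at hult; linarith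
        have h4 : (1 - b/u)*u = u - b := by field_simp
        linarith
      linarith
    exact max_eq_left (max_le hA0 hB0)
end

section
/- For b > 0, a ≥ 0 and average bandwidth ū > 0, the maximum over 0 < E ≤ ū/2 of the function E ↦ (E - b)/((1+a)E) - 2(E - b)/((1+a)ū) is (1 - sqrt(2b/ū))²/(1+a), attained at E = sqrt(b·ū/2). -/
/-! Completing the square: writing `s = √(b ū / 2)`, so that `b = 2 s² / ū`,
the objective equals `(1 - 2 s / ū)² / (1 + a) - 2 (s - E)² / ((1 + a) E ū)`.
The second term is nonnegative and vanishes exactly at `E = s`, and `2 s / ū = √(2 b / ū)`. -/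

namespace MonoRate

noncomputable def efficiencyBound (a b u E : ℝ) : ℝ :=
  (E - b) / ((1 + a) * E) - 2 * (E - b) / ((1 + a) * u)

section

variable {a b u s E : ℝ}

theorem efficiencyBound_eq_sub_sq (ha : 1 + a ≠ 0) (hu : u ≠ 0) (hE : E ≠ 0)
    (hs : s ^ 2 = b * u / 2) :
    efficiencyBound a b u E
      = (1 - 2 * s / u) ^ 2 / (1 + a) - 2 * (s - E) ^ 2 / ((1 + a) * E * u) := by
  unfold efficiencyBound
  field_simp
  linear_combination (2 * u - 4 * E) * hs

theorem efficiencyBound_le (ha : 0 ≤ a) (hu : 0 < u) (hE : 0 < E) (hs : s ^ 2 = b * u / 2) :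
    efficiencyBound a b u E ≤ (1 - 2 * s / u) ^ 2 / (1 + a) := by
  rw [efficiencyBound_eq_sub_sq (by positivity) hu.ne' hE.ne' hs]
  have : 0 ≤ 2 * (s - E) ^ 2 / ((1 + a) * E * u) := by positivity
  linarith

theorem efficiencyBound_self (ha : 1 + a ≠ 0) (hu : u ≠ 0) (hs0 : s ≠ 0)
    (hs : s ^ 2 = b * u / 2) :
    efficiencyBound a b u s = (1 - 2 * s / u) ^ 2 / (1 + a) := by
  simp [efficiencyBound_eq_sub_sq ha hu hs0 hs]

end

theorem sqrt_two_mul_div_eq (hb : 0 ≤ b) (hu : 0 < u) :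
    √(2 * b / u) = 2 * √(b * u / 2) / u := by
  have hs : √(b * u / 2) ^ 2 = b * u / 2 := Real.sq_sqrt (by positivity)
  rw [← Real.sqrt_sq (by positivity : 0 ≤ 2 * √(b * u / 2) / u)]
  congr 1
  field_simp
  linear_combination (-2) * hs

theorem sqrt_mul_div_two_le (hu : 0 ≤ u) (h2 : 2 * b ≤ u) :
    √(b * u / 2) ≤ u / 2 :=
  Real.sqrt_le_iff.mpr ⟨by positivity, by nlinarith⟩

end MonoRate

open MonoRate in
/-- For b > 0, a ≥ 0 and average bandwidth ū ≥ 2b, the maximum over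
0 < E ≤ ū/2 of E ↦ (E - b)/((1+a)E) - 2(E - b)/((1+a)ū) is (1 - √(2b/ū))²/(1+a),
attained at E = √(b·ū/2). -/
theorem stmt17 (a b ub : ℝ) (ha : 0 ≤ a) (hb : 0 < b) (hub : 0 < ub) (h2 : 2*b ≤ ub) :
    IsGreatest {y : ℝ | ∃ E : ℝ, 0 < E ∧ E ≤ ub/2 ∧
        y = (E - b)/((1+a)*E) - 2*(E - b)/((1+a)*ub)}
      ((1 - Real.sqrt (2*b/ub))^2/(1+a)) ∧
    0 < Real.sqrt (b*ub/2) ∧ Real.sqrt (b*ub/2) ≤ ub/2 ∧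
    (Real.sqrt (b*ub/2) - b)/((1+a)*Real.sqrt (b*ub/2))
        - 2*(Real.sqrt (b*ub/2) - b)/((1+a)*ub)
      = (1 - Real.sqrt (2*b/ub))^2/(1+a) := by
  set s := √(b * ub / 2)
  have hs : 0 < s := Real.sqrt_pos.mpr (by positivity)
  have hs2 : s ^ 2 = b * ub / 2 := Real.sq_sqrt (by positivity)
  have hsle : s ≤ ub / 2 := sqrt_mul_div_two_le hub.le h2
  have hpeak := efficiencyBound_self (by positivity) hub.ne' hs.ne' hs2
  rw [sqrt_two_mul_div_eq hb.le hub]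
  refine ⟨⟨⟨s, hs, hsle, hpeak.symm⟩, ?_⟩, hs, hsle, hpeak⟩
  rintro y ⟨E, hE, -, rfl⟩
  exact efficiencyBound_le ha hub hE hs2
end
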